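/- Cauchy mean value theorem for regulated functions: Let f, g be regulated on (a,b), α strictly increasing, with (D_α f)(x) and (D_α g)(x) existing for all x ∈ (a,b). Then for any a < s < t < b there exist u, v ∈ (s,t) such that [(g^-(t)-g^+(s))(D_α f)(u) - (f^-(t)-f^+(s))(D_α g)(u)] · [(g^-(t)-g^+(s))(D_α f)(v) - (f^-(t)-f^+(s))(D_α g)(v)] ≤ 0. -/

import Mathlib

/-!
Put `h = A f - B g` with `A = g⁻(t) - g⁺(s)` and `B = f⁻(t) - f⁺(s)`, so that `h⁺(s) = h⁻(t)` and
`D_α h = A D_α f - B D_α g`. If the claim failed, `D_α h` would have a constant strict sign on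
`(s, t)`, positive after rescaling `h`. Since α-increments across a point are positive, a positive
`D_α h` at `x` gives `h⁺(x - η) < h⁻(x + η)` for small `η > 0`, and in the limit `h⁻(x) ≤ h⁺(x)`.
Continuous induction on `z` for the property `K ≤ h⁻(z)`, where `K < h⁺(p)`, turns these local
inequalities into `h⁺(p) ≤ h⁻(z)` for `p < z`; chaining through one strict local step gives
`h⁺(s) < h⁻(t)`, a contradiction.
-/

open Filter Topology Function Set MeasureTheory

/-- `x` lies in the interval `(a, b)` with extended-real endpoints. -/
def MemI (a b : EReal) (x : ℝ) : Prop := a < (x : EReal) ∧ (x : EReal) < b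

/-- `f` is regulated on `(a, b)`: both one-sided limits exist (as real numbers)
at every point of `(a, b)`. -/
def RegulatedOn' (f : ℝ → ℝ) (a b : EReal) : Prop :=
  ∀ x : ℝ, MemI a b x →
    (∃ L : ℝ, Tendsto f (𝓝[<] x) (𝓝 L)) ∧ ∃ R : ℝ, Tendsto f (𝓝[>] x) (𝓝 R)

/-- The symmetric `α`-derivative of `f` at `x` equals `A`:
`(D_α f)(x) = lim_{h↓0} (f⁻(x+h) - f⁺(x-h)) / (α⁻(x+h) - α⁺(x-h))`. -/
def HasDerivAlpha (f α : ℝ → ℝ) (x A : ℝ) : Prop :=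
  Tendsto (fun h : ℝ =>
      (leftLim f (x + h) - rightLim f (x - h)) /
        (leftLim α (x + h) - rightLim α (x - h)))
    (𝓝[>] (0 : ℝ)) (𝓝 A)

/-- The filter of real numbers approaching `b : EReal` from the left (`x ↑ b`). -/
noncomputable def leftFilter (b : EReal) : Filter ℝ := comap (fun x : ℝ => (x : EReal)) (𝓝[<] b)

/-- The filter of real numbers approaching `a : EReal` from the right (`x ↓ a`). -/
noncomputable def rightFilter (a : EReal) : Filter ℝ := comap (fun x : ℝ => (x : EReal)) (𝓝[>] a)

section LeftRightLim

variable {X Y : Type*} [LinearOrder X] [TopologicalSpace X] [OrderTopology X]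
  [TopologicalSpace Y] [T3Space Y]

/-- No one-sided limits need to exist near `x`: where `leftLim f z` is a junk value, it is `f z`. -/
theorem tendsto_leftLim_nhdsWithin_of_isOpen {f : X → Y} {s : Set X} {x : X} {y : Y}
    (hs : IsOpen s) (hf : Tendsto f (𝓝[s] x) (𝓝 y)) : Tendsto (leftLim f) (𝓝[s] x) (𝓝 y) := by
  refine (closed_nhds_basis y).tendsto_right_iff.2 fun C ⟨hC, hC_closed⟩ => ?_
  filter_upwards [eventually_eventually_nhdsWithin.2 (hf hC), self_mem_nhdsWithin] with z hz hzs
  rw [hs.nhdsWithin_eq hzs] at hz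
  exact hC_closed.mem_of_mapClusterPt (mapClusterPt_leftLim f z) (nhdsWithin_le_nhds hz)

theorem tendsto_rightLim_nhdsWithin_of_isOpen {f : X → Y} {s : Set X} {x : X} {y : Y}
    (hs : IsOpen s) (hf : Tendsto f (𝓝[s] x) (𝓝 y)) : Tendsto (rightLim f) (𝓝[s] x) (𝓝 y) :=
  tendsto_leftLim_nhdsWithin_of_isOpen (X := Xᵒᵈ) hs hf

end LeftRightLim

theorem rightLim_lt_leftLim_of_strictMonoOn {X Y : Type*} [LinearOrder X] [TopologicalSpace X]
    [OrderTopology X] [DenselyOrdered X] [LinearOrder Y] [TopologicalSpace Y]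
    [OrderClosedTopology Y]
    {α : X → Y} {p q : X} (hα : StrictMonoOn α (Icc p q)) (hpq : p < q) :
    rightLim α p < leftLim α q := by
  obtain ⟨m₁, hpm₁, hm₁q⟩ := exists_between hpq
  obtain ⟨m₂, hm₁m₂, hm₂q⟩ := exists_between hm₁q
  have hm₁ : m₁ ∈ Icc p q := ⟨hpm₁.le, hm₁q.le⟩
  have hm₂ : m₂ ∈ Icc p q := ⟨hpm₁.le.trans hm₁m₂.le, hm₂q.le⟩
  have h₁ : rightLim α p ≤ α m₁ := by
    refine isClosed_Iic.mem_of_mapClusterPt (mapClusterPt_rightLim α p) ?_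
    filter_upwards [Ico_mem_nhdsGE hpm₁] with z hz
    exact hα.monotoneOn ⟨hz.1, hz.2.le.trans hm₁q.le⟩ hm₁ hz.2.le
  have h₂ : α m₂ ≤ leftLim α q := by
    refine isClosed_Ici.mem_of_mapClusterPt (mapClusterPt_leftLim α q) ?_
    filter_upwards [Ioc_mem_nhdsLE hm₂q] with z hz
    exact hα.monotoneOn hm₂ ⟨hpm₁.le.trans (hm₁m₂.le.trans hz.1.le), hz.2⟩ hz.1.le
  exact h₁.trans_lt ((hα hm₁ hm₂ hm₁m₂).trans_le h₂)

theorem forall_mem_Ioc_of_continuous_induction {X : Type*} [ConditionallyCompleteLinearOrder X]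
    [TopologicalSpace X] [OrderTopology X] [DenselyOrdered X] {P : X → Prop} {p q : X}
    (start : ∀ᶠ z in 𝓝[>] p, P z)
    (left_closed : ∀ c ∈ Ioc p q, (∀ z ∈ Ioo p c, P z) → P c)
    (step : ∀ c ∈ Ioo p q, (∀ z ∈ Ioo p c, P z) → ∀ᶠ z in 𝓝[>] c, P z) :
    ∀ z ∈ Ioc p q, P z := by
  set S := {y | ∀ z ∈ Ioo p y, P z}
  have hS : IsClosed S := isClosed_of_closure_subset fun y hy z hz => by
    obtain ⟨y', hzy', hy'⟩ := mem_closure_iff_nhds.1 hy _ (Ioi_mem_nhds hz.2)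
    exact hy' z ⟨hz.1, hzy'⟩
  have hpS : p ∈ S := fun z hz => absurd hz.2 hz.1.not_gt
  have hIcc : Icc p q ⊆ S := by
    refine (hS.inter isClosed_Icc).Icc_subset_of_forall_mem_nhdsWithin hpS fun x ⟨hxS, hx⟩ => ?_
    rcases hx.1.eq_or_lt with rfl | hpx
    · obtain ⟨u, hu, hPu⟩ := (mem_nhdsGT_iff_exists_Ioo_subset' hx.2).1 start
      filter_upwards [Ioo_mem_nhdsGT hu] with y hy z hz
      exact hPu ⟨hz.1, hz.2.trans hy.2⟩
    · have hPx : P x := left_closed x ⟨hpx, hx.2.le⟩ hxS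
      obtain ⟨u, hu, hPu⟩ := (mem_nhdsGT_iff_exists_Ioo_subset' hx.2).1 (step x ⟨hpx, hx.2⟩ hxS)
      filter_upwards [Ioo_mem_nhdsGT hu] with y hy z hz
      rcases lt_trichotomy z x with hzx | rfl | hxz
      · exact hxS z ⟨hz.1, hzx⟩
      · exact hPx
      · exact hPu ⟨hxz, hz.2.trans hy.2⟩
  exact fun z hz => left_closed z hz (hIcc ⟨hz.1.le, hz.2⟩)

theorem map_add_nhdsGT_zero (c : ℝ) : map (c + ·) (𝓝[>] 0) = 𝓝[>] c := by
  simp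

theorem map_sub_nhdsGT_zero (c : ℝ) : map (c - ·) (𝓝[>] 0) = 𝓝[<] c := by
  simp

section LocalIncrease

variable {h : ℝ → ℝ}

theorem leftLim_le_rightLim_of_eventually_lt {x : ℝ} (hl : ∃ L, Tendsto h (𝓝[<] x) (𝓝 L))
    (hr : ∃ R, Tendsto h (𝓝[>] x) (𝓝 R))
    (hloc : ∀ᶠ η in 𝓝[>] 0, rightLim h (x - η) < leftLim h (x + η)) :
    leftLim h x ≤ rightLim h x := by
  have h₁ : Tendsto (fun η => rightLim h (x - η)) (𝓝[>] 0) (𝓝 (leftLim h x)) :=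
    (tendsto_rightLim_nhdsWithin_of_isOpen isOpen_Iio (tendsto_leftLim_of_tendsto hl)).comp
      (map_sub_nhdsGT_zero x).le
  have h₂ : Tendsto (fun η => leftLim h (x + η)) (𝓝[>] 0) (𝓝 (rightLim h x)) :=
    (tendsto_leftLim_nhdsWithin_of_isOpen isOpen_Ioi (tendsto_rightLim_of_tendsto hr)).comp
      (map_add_nhdsGT_zero x).le
  exact le_of_tendsto_of_tendsto h₁ h₂ (hloc.mono fun _ => le_of_lt)

variable {s t : ℝ}
  (hreg : ∀ x ∈ Icc s t, (∃ L, Tendsto h (𝓝[<] x) (𝓝 L)) ∧ ∃ R, Tendsto h (𝓝[>] x) (𝓝 R))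
  (hloc : ∀ x ∈ Ioo s t, ∀ᶠ η in 𝓝[>] 0, rightLim h (x - η) < leftLim h (x + η))
include hreg hloc

theorem leftLim_le_rightLim_of_forall_eventually_lt {x : ℝ} (hx : x ∈ Ioo s t) :
    leftLim h x ≤ rightLim h x :=
  leftLim_le_rightLim_of_eventually_lt (hreg x (Ioo_subset_Icc_self hx)).1
    (hreg x (Ioo_subset_Icc_self hx)).2 (hloc x hx)

theorem rightLim_le_leftLim_of_forall_eventually_lt {p z : ℝ} (hp : p ∈ Ico s t)
    (hz : z ∈ Ioc p t) : rightLim h p ≤ leftLim h z := by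
  refine le_of_forall_lt_imp_le_of_dense fun K hK => ?_
  refine forall_mem_Ioc_of_continuous_induction (P := fun z => K ≤ leftLim h z) ?_ ?_ ?_ z hz
  · have := tendsto_leftLim_nhdsWithin_of_isOpen isOpen_Ioi
      (tendsto_rightLim_of_tendsto (hreg p (Ico_subset_Icc_self hp)).2)
    exact this.eventually (eventually_ge_nhds hK)
  · intro c hc hK_lt
    have hc' : c ∈ Icc s t := ⟨hp.1.trans hc.1.le, hc.2⟩
    refine ge_of_tendsto (tendsto_leftLim_nhdsWithin_of_isOpen isOpen_Iio
      (tendsto_leftLim_of_tendsto (hreg c hc').1)) ?_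
    filter_upwards [Ioo_mem_nhdsLT hc.1] using hK_lt
  · intro c hc hK_lt
    rw [← map_add_nhdsGT_zero c, eventually_map]
    filter_upwards [hloc c ⟨hp.1.trans_lt hc.1, hc.2⟩, Ioo_mem_nhdsGT (sub_pos.2 hc.1)]
      with η hη hηc
    have hcη : c - η ∈ Ioo s t := ⟨by linarith [hp.1, hηc.2], by linarith [hηc.1, hc.2]⟩
    calc K ≤ leftLim h (c - η) := hK_lt _ ⟨by linarith [hηc.2], by linarith [hηc.1]⟩
      _ ≤ rightLim h (c - η) := leftLim_le_rightLim_of_forall_eventually_lt hreg hloc hcη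
      _ ≤ leftLim h (c + η) := hη.le

theorem rightLim_lt_leftLim_of_forall_eventually_lt (hst : s < t) :
    rightLim h s < leftLim h t := by
  set x := (s + t) / 2 with hx
  obtain ⟨η, hη, hηx⟩ := ((hloc x ⟨by linarith, by linarith⟩).and
    (Ioo_mem_nhdsGT (show (0 : ℝ) < (t - s) / 2 by linarith))).exists
  have hη₁ : x - η ∈ Ioo s t := ⟨by linarith [hηx.2], by linarith [hηx.1]⟩
  have hη₂ : x + η ∈ Ioo s t := ⟨by linarith [hηx.1], by linarith [hηx.2]⟩
  calc rightLim h s ≤ leftLim h (x - η) :=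
        rightLim_le_leftLim_of_forall_eventually_lt hreg hloc ⟨le_rfl, hst⟩ ⟨hη₁.1, hη₁.2.le⟩
    _ ≤ rightLim h (x - η) := leftLim_le_rightLim_of_forall_eventually_lt hreg hloc hη₁
    _ < leftLim h (x + η) := hη
    _ ≤ rightLim h (x + η) := leftLim_le_rightLim_of_forall_eventually_lt hreg hloc hη₂
    _ ≤ leftLim h t :=
        rightLim_le_leftLim_of_forall_eventually_lt hreg hloc ⟨hη₂.1.le, hη₂.2⟩ ⟨hη₂.2, le_rfl⟩

end LocalIncrease

theorem HasDerivAlpha.eventually_rightLim_lt_leftLim {h α : ℝ → ℝ} {x D : ℝ} {U : Set ℝ}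
    (hD : HasDerivAlpha h α x D) (hD_pos : 0 < D) (hα : StrictMonoOn α U) (hU : U ∈ 𝓝 x) :
    ∀ᶠ η in 𝓝[>] 0, rightLim h (x - η) < leftLim h (x + η) := by
  obtain ⟨r, hr, hball⟩ := Metric.mem_nhds_iff.1 hU
  filter_upwards [hD.eventually (eventually_gt_nhds hD_pos), Ioo_mem_nhdsGT hr] with η hq hη
  have hsub : Icc (x - η) (x + η) ⊆ U :=
    Real.closedBall_eq_Icc ▸ (Metric.closedBall_subset_ball hη.2).trans hball
  have hgap := rightLim_lt_leftLim_of_strictMonoOn (hα.mono hsub) (by linarith [hη.1])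
  linarith [(div_pos_iff_of_pos_right (sub_pos.2 hgap)).1 hq]

theorem isOpen_setOf_memI {a b : EReal} : IsOpen {x | MemI a b x} :=
  isOpen_Ioo.preimage continuous_coe_real_ereal

theorem memI_of_mem_Icc {a b : EReal} {s t x : ℝ} (hs : MemI a b s) (ht : MemI a b t)
    (hx : x ∈ Icc s t) : MemI a b x :=
  ⟨hs.1.trans_le (EReal.coe_le_coe_iff.2 hx.1), (EReal.coe_le_coe_iff.2 hx.2).trans_lt ht.2⟩

section LinearCombination

variable {f g : ℝ → ℝ} {a b : EReal} {x : ℝ} (A B : ℝ)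

theorem leftLim_linComb (hf : ∃ L, Tendsto f (𝓝[<] x) (𝓝 L))
    (hg : ∃ L, Tendsto g (𝓝[<] x) (𝓝 L)) :
    leftLim (fun y => A * f y - B * g y) x = A * leftLim f x - B * leftLim g x :=
  leftLim_eq_of_tendsto
    (((tendsto_leftLim_of_tendsto hf).const_mul A).sub
      ((tendsto_leftLim_of_tendsto hg).const_mul B))

theorem rightLim_linComb (hf : ∃ R, Tendsto f (𝓝[>] x) (𝓝 R))
    (hg : ∃ R, Tendsto g (𝓝[>] x) (𝓝 R)) :
    rightLim (fun y => A * f y - B * g y) x = A * rightLim f x - B * rightLim g x :=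
  rightLim_eq_of_tendsto
    (((tendsto_rightLim_of_tendsto hf).const_mul A).sub
      ((tendsto_rightLim_of_tendsto hg).const_mul B))

theorem RegulatedOn'.linComb (hf : RegulatedOn' f a b) (hg : RegulatedOn' g a b) :
    RegulatedOn' (fun y => A * f y - B * g y) a b := fun x hx =>
  ⟨⟨_, ((tendsto_leftLim_of_tendsto (hf x hx).1).const_mul A).sub
      ((tendsto_leftLim_of_tendsto (hg x hx).1).const_mul B)⟩,
    ⟨_, ((tendsto_rightLim_of_tendsto (hf x hx).2).const_mul A).sub
      ((tendsto_rightLim_of_tendsto (hg x hx).2).const_mul B)⟩⟩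

theorem HasDerivAlpha.linComb {α : ℝ → ℝ} {Df Dg : ℝ} (hf_reg : RegulatedOn' f a b)
    (hg_reg : RegulatedOn' g a b) (hx : MemI a b x) (hf : HasDerivAlpha f α x Df)
    (hg : HasDerivAlpha g α x Dg) :
    HasDerivAlpha (fun y => A * f y - B * g y) α x (A * Df - B * Dg) := by
  refine ((hf.const_mul A).sub (hg.const_mul B)).congr' ?_
  have hnhds : ∀ᶠ y in 𝓝 x, MemI a b y := isOpen_setOf_memI.mem_nhds hx
  have hadd := (continuous_const_add x).tendsto' 0 x (add_zero x)
  have hsub := (continuous_sub_left x).tendsto' 0 x (sub_zero x)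
  filter_upwards [nhdsWithin_le_nhds (hadd.eventually hnhds),
    nhdsWithin_le_nhds (hsub.eventually hnhds)] with η hη₁ hη₂
  rw [leftLim_linComb A B (hf_reg _ hη₁).1 (hg_reg _ hη₁).1,
    rightLim_linComb A B (hf_reg _ hη₂).2 (hg_reg _ hη₂).2]
  ring

end LinearCombination

theorem rightLim_lt_leftLim_of_hasDerivAlpha_pos {h α D : ℝ → ℝ} {a b : EReal} {s t : ℝ}
    (h_reg : RegulatedOn' h a b) (hα : StrictMonoOn α {x | MemI a b x})
    (hD : ∀ x ∈ Ioo s t, HasDerivAlpha h α x (D x)) (hD_pos : ∀ x ∈ Ioo s t, 0 < D x)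
    (hs : MemI a b s) (ht : MemI a b t) (hst : s < t) :
    rightLim h s < leftLim h t :=
  rightLim_lt_leftLim_of_forall_eventually_lt (fun x hx => h_reg x (memI_of_mem_Icc hs ht hx))
    (fun x hx => (hD x hx).eventually_rightLim_lt_leftLim (hD_pos x hx) hα
      (isOpen_setOf_memI.mem_nhds (memI_of_mem_Icc hs ht (Ioo_subset_Icc_self hx)))) hst

theorem stmt12_general (a b : EReal) (f g α : ℝ → ℝ) (Df Dg : ℝ → ℝ)
    (hf : RegulatedOn' f a b) (hg : RegulatedOn' g a b)
    (hα : StrictMonoOn α {x : ℝ | MemI a b x})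
    (hDf : ∀ x : ℝ, MemI a b x → HasDerivAlpha f α x (Df x))
    (hDg : ∀ x : ℝ, MemI a b x → HasDerivAlpha g α x (Dg x))
    (s t : ℝ) (hs : MemI a b s) (ht : MemI a b t) (hst : s < t) :
    ∃ u ∈ Ioo s t, ∃ v ∈ Ioo s t,
      ((leftLim g t - rightLim g s) * Df u - (leftLim f t - rightLim f s) * Dg u) *
        ((leftLim g t - rightLim g s) * Df v - (leftLim f t - rightLim f s) * Dg v) ≤ 0 := by
  by_contra! hcon
  set A := leftLim g t - rightLim g s
  set B := leftLim f t - rightLim f s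
  have hm : (s + t) / 2 ∈ Ioo s t := ⟨by linarith, by linarith⟩
  set c := A * Df ((s + t) / 2) - B * Dg ((s + t) / 2)
  have hmem : ∀ x ∈ Ioo s t, MemI a b x := fun x hx =>
    memI_of_mem_Icc hs ht (Ioo_subset_Icc_self hx)
  -- `c (A Df - B Dg) > 0` on `(s, t)`, yet `c A f - c B g` has equal limits at `s⁺` and `t⁻`.
  have key := rightLim_lt_leftLim_of_hasDerivAlpha_pos (hf.linComb (c * A) (c * B) hg) hα
    (fun x hx => (hDf x (hmem x hx)).linComb _ _ hf hg (hmem x hx) (hDg x (hmem x hx)))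
    (fun x hx => by linarith [hcon _ hm x hx]) hs ht hst
  rw [rightLim_linComb _ _ (hf s hs).2 (hg s hs).2, leftLim_linComb _ _ (hf t ht).1 (hg t ht).1]
    at key
  linarith

/-- Cauchy's mean value theorem for regulated functions. -/
theorem stmt12 (a b : EReal) (hab : a < b) (f g α : ℝ → ℝ) (Df Dg : ℝ → ℝ)
    (hf : RegulatedOn' f a b) (hg : RegulatedOn' g a b)
    (hα : StrictMonoOn α {x : ℝ | MemI a b x})
    (hDf : ∀ x : ℝ, MemI a b x → HasDerivAlpha f α x (Df x))
    (hDg : ∀ x : ℝ, MemI a b x → HasDerivAlpha g α x (Dg x))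
    (s t : ℝ) (hs : MemI a b s) (ht : MemI a b t) (hst : s < t) :
    ∃ u ∈ Ioo s t, ∃ v ∈ Ioo s t,
      ((leftLim g t - rightLim g s) * Df u - (leftLim f t - rightLim f s) * Dg u) *
        ((leftLim g t - rightLim g s) * Df v - (leftLim f t - rightLim f s) * Dg v) ≤ 0 :=
  stmt12_general a b f g α Df Dg hf hg hα hDf hDg s t hs ht hst
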